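/- The representation of a matrix in the class EQT is unique: if T(a) + E_a + e v_a^T = T(a') + E_{a'} + e v_{a'}^T entrywise, where a and a' are Wiener-class sequences, E_a and E_{a'} are semi-infinite matrices with the decay property, and v_a, v_{a'} ∈ ℓ¹, then a = a', v_a = v_{a'}, and E_a = E_{a'}. -/
import Mathlib


open Filter Topology

/-- Every row of `A` is absolutely summable. -/
def RowsSummable (A : ℕ → ℕ → ℝ) : Prop := ∀ i, Summable fun j => |A i j|

/-- The infinity norm of a semi-infinite matrix: the supremum of the row sums. -/
noncomputable def normInf (A : ℕ → ℕ → ℝ) : ℝ := ⨆ i, ∑' j, |A i j|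

/-- `A` is bounded: all row sums are finite and their supremum is finite. -/
def MatBounded (A : ℕ → ℕ → ℝ) : Prop :=
  RowsSummable A ∧ BddAbove (Set.range fun i => ∑' j, |A i j|)

/-- `A` has the decay property: all row sums are finite and tend to zero. -/
def HasDecay (A : ℕ → ℕ → ℝ) : Prop :=
  RowsSummable A ∧ Tendsto (fun i => ∑' j, |A i j|) atTop (𝓝 0)

/-- The semi-infinite Toeplitz matrix associated with a two-sided sequence:
`T(a)_{ij} = a_{j−i}`. -/
noncomputable def Toep (a : ℤ → ℝ) : ℕ → ℕ → ℝ := fun i j => a ((j : ℤ) - (i : ℤ))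

/-- Convolution of two-sided sequences. -/
noncomputable def zconv (a b : ℤ → ℝ) : ℤ → ℝ := fun n => ∑' k : ℤ, a k * b (n - k)

/- STATEMENT 12: uniqueness of the EQT representation. -/

theorem stmt12 (a a' : ℤ → ℝ) (ha : Summable fun n => |a n|)
    (ha' : Summable fun n => |a' n|)
    (Ea Ea' : ℕ → ℕ → ℝ) (hEa : HasDecay Ea) (hEa' : HasDecay Ea')
    (va va' : ℕ → ℝ) (hva : Summable fun j => |va j|) (hva' : Summable fun j => |va' j|)
    (heq : ∀ i j, Toep a i j + Ea i j + va j = Toep a' i j + Ea' i j + va' j) :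
    a = a' ∧ va = va' ∧ Ea = Ea' := by
  -- entrywise decay along any column-selection
  have aux : ∀ (E : ℕ → ℕ → ℝ), HasDecay E → ∀ (j : ℕ → ℕ),
      Tendsto (fun i => E i (j i)) atTop (𝓝 0) := by
    intro E hE j
    apply squeeze_zero_norm _ hE.2
    intro n
    rw [Real.norm_eq_abs]
    exact Summable.le_tsum (hE.1 n) (j n) (fun _ _ => abs_nonneg _)
  have hv0 : ∀ (v : ℕ → ℝ), (Summable fun j => |v j|) → Tendsto v atTop (𝓝 0) := by
    intro v hv
    exact squeeze_zero_norm (fun n => le_of_eq (Real.norm_eq_abs _)) hv.tendsto_atTop_zero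
  -- Step 1 : a = a'
  have haa : a = a' := by
    funext n
    set j : ℕ → ℕ := fun i => (n + i).toNat with hjdef
    have hjtop : Tendsto j atTop atTop := by
      rw [tendsto_atTop_atTop]
      intro b
      refine ⟨b + n.natAbs, fun i hi => ?_⟩
      simp only [hjdef]
      omega
    have hlim : Tendsto (fun i => (Ea' i (j i) - Ea i (j i)) + (va' (j i) - va (j i)))
        atTop (𝓝 0) := by
      have h1 := (aux Ea' hEa' j).sub (aux Ea hEa j)
      have h2 := ((hv0 va' hva').comp hjtop).sub ((hv0 va hva).comp hjtop)
      have := h1.add h2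
      simpa using this
    have hev : ∀ᶠ i in atTop, (Ea' i (j i) - Ea i (j i)) + (va' (j i) - va (j i))
        = a n - a' n := by
      filter_upwards [eventually_ge_atTop n.natAbs] with i hi
      have hji : ((j i : ℤ)) - (i : ℤ) = n := by simp only [hjdef]; omega
      have := heq i (j i)
      simp only [Toep, hji] at this
      linarith
    have : Tendsto (fun _ : ℕ => a n - a' n) atTop (𝓝 0) :=
      hlim.congr' hev
    have h0 : a n - a' n = 0 := tendsto_nhds_unique tendsto_const_nhds this
    linarith
  -- Step 2 : va = va'
  have hvv : va = va' := by
    funext j0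
    have hlim : Tendsto (fun i => Ea' i j0 - Ea i j0) atTop (𝓝 0) := by
      have := (aux Ea' hEa' (fun _ => j0)).sub (aux Ea hEa (fun _ => j0))
      simpa using this
    have hev : ∀ i, Ea' i j0 - Ea i j0 = va j0 - va' j0 := by
      intro i
      have := heq i j0
      simp only [Toep, haa] at this
      linarith
    have : Tendsto (fun _ : ℕ => va j0 - va' j0) atTop (𝓝 0) := by
      simpa only [hev] using hlim
    have h0 : va j0 - va' j0 = 0 := tendsto_nhds_unique tendsto_const_nhds this
    linarith
  -- Step 3 : Ea = Ea'
  refine ⟨haa, hvv, ?_⟩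
  funext i j
  have := heq i j
  simp only [Toep, haa, hvv] at this
  linarith
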